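/- Fix x and constants m(x), n(x), p(x), q(x) ∈ ℝ with n(x) > 0, p(x) ≥ 0, q(x) > 0. Define F(u,v) = (m(x) − n(x)u − p(x)v/(u+v))u + q(x)v for (u,v) ∈ ℝ₊² \ {(0,0)} and F(0,0) = 0, and similarly G(u,v) = (p(x)u/(u+v) − q(x))v with G(0,0) = 0. Then for every M > 0, F and G are Lipschitz continuous on the set {(u,v) : 0 ≤ u, v ≤ M}. -/
import Mathlib


open Real Set

noncomputable def sisPhi (u v : ℝ) : ℝ := if u + v = 0 then 0 else u * v / (u + v)

lemma sisPhi_comm (u v : ℝ) : sisPhi u v = sisPhi v u := by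
  unfold sisPhi
  rw [add_comm v u, mul_comm v u]

lemma sisPhi_zero_right (u : ℝ) : sisPhi u 0 = 0 := by
  unfold sisPhi
  split <;> simp

lemma sisPhi_left_lip (u₁ u₂ v : ℝ) (h1 : 0 ≤ u₁) (h2 : 0 ≤ u₂) (hv : 0 ≤ v) :
    |sisPhi u₁ v - sisPhi u₂ v| ≤ |u₁ - u₂| := by
  rcases hv.eq_or_lt with h | h
  · rw [← h, sisPhi_zero_right, sisPhi_zero_right]
    simp [abs_nonneg]
  · have d₁ : 0 < u₁ + v := by linarith
    have d₂ : 0 < u₂ + v := by linarith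
    have hD : 0 < (u₁ + v) * (u₂ + v) := mul_pos d₁ d₂
    unfold sisPhi
    rw [if_neg d₁.ne', if_neg d₂.ne']
    have key : u₁ * v / (u₁ + v) - u₂ * v / (u₂ + v)
        = v * v * (u₁ - u₂) / ((u₁ + v) * (u₂ + v)) := by
      field_simp
      ring
    rw [key, abs_div, abs_of_pos hD, div_le_iff₀ hD, abs_mul, abs_of_nonneg (mul_nonneg h.le h.le)]
    have hvv : v * v ≤ (u₁ + v) * (u₂ + v) := by nlinarith
    exact mul_le_mul_of_nonneg_right hvv (abs_nonneg _) |>.trans_eq (by ring)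

lemma sisPhi_lip (u₁ v₁ u₂ v₂ : ℝ) (hu1 : 0 ≤ u₁) (hv1 : 0 ≤ v₁) (hu2 : 0 ≤ u₂)
    (hv2 : 0 ≤ v₂) : |sisPhi u₁ v₁ - sisPhi u₂ v₂| ≤ |u₁ - u₂| + |v₁ - v₂| := by
  calc |sisPhi u₁ v₁ - sisPhi u₂ v₂|
      ≤ |sisPhi u₁ v₁ - sisPhi u₂ v₁| + |sisPhi u₂ v₁ - sisPhi u₂ v₂| := abs_sub_le _ _ _
    _ ≤ |u₁ - u₂| + |v₁ - v₂| := by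
        refine add_le_add (sisPhi_left_lip u₁ u₂ v₁ hu1 hu2 hv1) ?_
        rw [sisPhi_comm u₂ v₁, sisPhi_comm u₂ v₂]
        exact sisPhi_left_lip v₁ v₂ u₂ hv1 hv2 hu2

/-- the SIS nonlinearities F(u,v) = (m − n u − p v/(u+v))u + q v and
G(u,v) = (p u/(u+v) − q)v, extended by 0 at the origin, are Lipschitz on
every bounded square [0,M]² of the closed first quadrant. -/
theorem sis_nonlinearities_lipschitz
    (m n p q : ℝ) (hn : 0 < n) (hp : 0 ≤ p) (hq : 0 < q)
    (F G : ℝ × ℝ → ℝ)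
    (hF : ∀ u v : ℝ, 0 ≤ u → 0 ≤ v → 0 < u + v →
      F (u, v) = (m - n * u - p * v / (u + v)) * u + q * v)
    (hF0 : F (0, 0) = 0)
    (hG : ∀ u v : ℝ, 0 ≤ u → 0 ≤ v → 0 < u + v →
      G (u, v) = (p * u / (u + v) - q) * v)
    (hG0 : G (0, 0) = 0) :
    ∀ M : ℝ, 0 < M →
      (∃ K : NNReal, LipschitzOnWith K F
        {w : ℝ × ℝ | 0 ≤ w.1 ∧ w.1 ≤ M ∧ 0 ≤ w.2 ∧ w.2 ≤ M}) ∧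
      (∃ K : NNReal, LipschitzOnWith K G
        {w : ℝ × ℝ | 0 ≤ w.1 ∧ w.1 ≤ M ∧ 0 ≤ w.2 ∧ w.2 ≤ M}) := by
  intro M hM
  set S : Set (ℝ × ℝ) := {w : ℝ × ℝ | 0 ≤ w.1 ∧ w.1 ≤ M ∧ 0 ≤ w.2 ∧ w.2 ≤ M}
  -- closed forms on S
  have hFeq : ∀ w ∈ S, F w = m * w.1 - n * (w.1 * w.1) - p * sisPhi w.1 w.2 + q * w.2 := by
    rintro ⟨u, v⟩ ⟨hu, _, hv, _⟩
    rcases eq_or_lt_of_le (add_nonneg hu hv) with h | h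
    · have hu0 : u = 0 := by linarith [hu, hv]
      have hv0 : v = 0 := by linarith [hu, hv]
      subst hu0; subst hv0
      rw [hF0]; simp [sisPhi]
    · rw [hF u v hu hv h]
      unfold sisPhi
      rw [if_neg h.ne']
      field_simp
  have hGeq : ∀ w ∈ S, G w = p * sisPhi w.1 w.2 - q * w.2 := by
    rintro ⟨u, v⟩ ⟨hu, _, hv, _⟩
    rcases eq_or_lt_of_le (add_nonneg hu hv) with h | h
    · have hu0 : u = 0 := by linarith [hu, hv]
      have hv0 : v = 0 := by linarith [hu, hv]
      subst hu0; subst hv0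
      rw [hG0]; simp [sisPhi]
    · rw [hG u v hu hv h]
      unfold sisPhi
      rw [if_neg h.ne']
      field_simp
  constructor
  · refine ⟨Real.toNNReal (|m| + 2 * n * M + 2 * p + q), ?_⟩
    rw [lipschitzOnWith_iff_dist_le_mul]
    rintro ⟨u₁, v₁⟩ hw₁ ⟨u₂, v₂⟩ hw₂
    obtain ⟨hu₁, hu₁M, hv₁, hv₁M⟩ := hw₁
    obtain ⟨hu₂, hu₂M, hv₂, hv₂M⟩ := hw₂
    rw [Real.coe_toNNReal _ (by positivity)]
    set D := dist (u₁, v₁) ((u₂, v₂) : ℝ × ℝ) with hD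
    have hDu : |u₁ - u₂| ≤ D := by
      have := le_max_left (dist u₁ u₂) (dist v₁ v₂)
      simpa [hD, Prod.dist_eq, Real.dist_eq] using this
    have hDv : |v₁ - v₂| ≤ D := by
      have := le_max_right (dist u₁ u₂) (dist v₁ v₂)
      simpa [hD, Prod.dist_eq, Real.dist_eq] using this
    have hD0 : 0 ≤ D := dist_nonneg
    rw [Real.dist_eq, hFeq _ ⟨hu₁, hu₁M, hv₁, hv₁M⟩, hFeq _ ⟨hu₂, hu₂M, hv₂, hv₂M⟩]
    have hphi : |sisPhi u₁ v₁ - sisPhi u₂ v₂| ≤ 2 * D := by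
      calc |sisPhi u₁ v₁ - sisPhi u₂ v₂| ≤ |u₁ - u₂| + |v₁ - v₂| :=
            sisPhi_lip u₁ v₁ u₂ v₂ hu₁ hv₁ hu₂ hv₂
        _ ≤ 2 * D := by linarith
    have hsq : |u₁ * u₁ - u₂ * u₂| ≤ 2 * M * D := by
      have : u₁ * u₁ - u₂ * u₂ = (u₁ + u₂) * (u₁ - u₂) := by ring
      rw [this, abs_mul]
      have h1 : |u₁ + u₂| ≤ 2 * M := by rw [abs_of_nonneg (by linarith)]; linarith
      calc |u₁ + u₂| * |u₁ - u₂| ≤ (2 * M) * D :=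
            mul_le_mul h1 hDu (abs_nonneg _) (by linarith)
        _ = 2 * M * D := by ring
    calc |(m * u₁ - n * (u₁ * u₁) - p * sisPhi u₁ v₁ + q * v₁)
          - (m * u₂ - n * (u₂ * u₂) - p * sisPhi u₂ v₂ + q * v₂)|
        = |m * (u₁ - u₂) - n * (u₁ * u₁ - u₂ * u₂)
            - p * (sisPhi u₁ v₁ - sisPhi u₂ v₂) + q * (v₁ - v₂)| := by ring_nf
      _ ≤ |m * (u₁ - u₂) - n * (u₁ * u₁ - u₂ * u₂) - p * (sisPhi u₁ v₁ - sisPhi u₂ v₂)|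
            + |q * (v₁ - v₂)| := abs_add_le _ _
      _ ≤ |m * (u₁ - u₂) - n * (u₁ * u₁ - u₂ * u₂)| + |p * (sisPhi u₁ v₁ - sisPhi u₂ v₂)|
            + |q * (v₁ - v₂)| := by gcongr; exact abs_sub _ _
      _ ≤ |m * (u₁ - u₂)| + |n * (u₁ * u₁ - u₂ * u₂)| + |p * (sisPhi u₁ v₁ - sisPhi u₂ v₂)|
            + |q * (v₁ - v₂)| := by gcongr; exact abs_sub _ _
      _ ≤ |m| * D + n * (2 * M * D) + p * (2 * D) + q * D := by
          rw [abs_mul, abs_mul, abs_mul, abs_mul, abs_of_pos hn, abs_of_nonneg hp,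
            abs_of_pos hq]
          gcongr <;> first | exact hDu | exact hsq | exact hphi | exact hDv
      _ = (|m| + 2 * n * M + 2 * p + q) * D := by ring
  · refine ⟨Real.toNNReal (2 * p + q), ?_⟩
    rw [lipschitzOnWith_iff_dist_le_mul]
    rintro ⟨u₁, v₁⟩ hw₁ ⟨u₂, v₂⟩ hw₂
    obtain ⟨hu₁, hu₁M, hv₁, hv₁M⟩ := hw₁
    obtain ⟨hu₂, hu₂M, hv₂, hv₂M⟩ := hw₂
    rw [Real.coe_toNNReal _ (by positivity)]
    set D := dist (u₁, v₁) ((u₂, v₂) : ℝ × ℝ) with hD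
    have hDu : |u₁ - u₂| ≤ D := by
      have := le_max_left (dist u₁ u₂) (dist v₁ v₂)
      simpa [hD, Prod.dist_eq, Real.dist_eq] using this
    have hDv : |v₁ - v₂| ≤ D := by
      have := le_max_right (dist u₁ u₂) (dist v₁ v₂)
      simpa [hD, Prod.dist_eq, Real.dist_eq] using this
    have hD0 : 0 ≤ D := dist_nonneg
    rw [Real.dist_eq, hGeq _ ⟨hu₁, hu₁M, hv₁, hv₁M⟩, hGeq _ ⟨hu₂, hu₂M, hv₂, hv₂M⟩]
    have hphi : |sisPhi u₁ v₁ - sisPhi u₂ v₂| ≤ 2 * D := by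
      calc |sisPhi u₁ v₁ - sisPhi u₂ v₂| ≤ |u₁ - u₂| + |v₁ - v₂| :=
            sisPhi_lip u₁ v₁ u₂ v₂ hu₁ hv₁ hu₂ hv₂
        _ ≤ 2 * D := by linarith
    calc |(p * sisPhi u₁ v₁ - q * v₁) - (p * sisPhi u₂ v₂ - q * v₂)|
        = |p * (sisPhi u₁ v₁ - sisPhi u₂ v₂) - q * (v₁ - v₂)| := by ring_nf
      _ ≤ |p * (sisPhi u₁ v₁ - sisPhi u₂ v₂)| + |q * (v₁ - v₂)| := abs_sub _ _
      _ ≤ p * (2 * D) + q * D := by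
          rw [abs_mul, abs_mul, abs_of_nonneg hp, abs_of_pos hq]
          gcongr <;> first | exact hphi | exact hDv
      _ = (2 * p + q) * D := by ring
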